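/- Let B be a finite set of permutations. Av(B) contains only finitely many of the reversed vertical wedge alternations τ_m^r (m ≥ 1) if and only if B contains a permutation that avoids both of the permutations 213 and 231. -/

import Mathlib

/-- A list of naturals is a permutation (in one-line notation) of `1,…,n`
where `n` is its length. -/
def IsPermList (l : List ℕ) : Prop :=
  l.Perm ((List.range l.length).map (· + 1))

/-- `f` is an occurrence of the pattern `β` in `π`: a strictly increasing
choice of indices of `π` whose entries are order isomorphic to `β`. -/
def IsOccurrence (π β : List ℕ) (f : Fin β.length → Fin π.length) : Prop :=
  StrictMono f ∧ ∀ s t : Fin β.length, π.get (f s) < π.get (f t) ↔ β.get s < β.get t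

/-- `π` contains the pattern `β`. -/
def PContains (π β : List ℕ) : Prop :=
  ∃ f : Fin β.length → Fin π.length, IsOccurrence π β f

/-- `π` avoids the pattern `β`. -/
def PAvoids (π β : List ℕ) : Prop :=
  ¬ PContains π β

/-- The class of permutations avoiding every member of `B`. -/
def Av (B : Set (List ℕ)) : Set (List ℕ) :=
  {π | IsPermList π ∧ ∀ β ∈ B, PAvoids π β}

/-- Insert a new maximum entry at (0-indexed) position `i` of `l`. -/
def insertMax (l : List ℕ) (i : ℕ) : List ℕ :=
  l.insertIdx i (l.length + 1)

/-- Position `i` is an active site of `l` relative to `B`. -/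
def ActiveSite (B : Set (List ℕ)) (l : List ℕ) (i : ℕ) : Prop :=
  i ≤ l.length ∧ insertMax l i ∈ Av B

/-- The increasing permutation `1,2,…,n`. -/
def incrPerm (n : ℕ) : List ℕ :=
  (List.range n).map (· + 1)

/-- A permutation (as a list) is a vertical alternation: every entry in an even
(1-indexed) position lies above every entry in an odd position, or vice versa.
(Index `s : Fin l.length` corresponds to 1-indexed position `s + 1`.) -/
def VerticalAlternation (l : List ℕ) : Prop :=
  (∀ s t : Fin l.length, s.val % 2 = 1 → t.val % 2 = 0 → l.get t < l.get s) ∨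
  (∀ s t : Fin l.length, s.val % 2 = 1 → t.val % 2 = 0 → l.get s < l.get t)

/-- The subsequence of entries in positions congruent to `r` (0-indexed, mod 2)
is increasing. -/
def IncOnRes (l : List ℕ) (r : ℕ) : Prop :=
  ∀ s t : Fin l.length, s < t → s.val % 2 = r → t.val % 2 = r → l.get s < l.get t

/-- The subsequence of entries in positions congruent to `r` (0-indexed, mod 2)
is decreasing. -/
def DecOnRes (l : List ℕ) (r : ℕ) : Prop :=
  ∀ s t : Fin l.length, s < t → s.val % 2 = r → t.val % 2 = r → l.get t < l.get s

/-- A vertical parallel alternation: a vertical alternation of even length whose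
odd-position and even-position subsequences are both increasing or both decreasing. -/
def IsVertParallel (l : List ℕ) : Prop :=
  VerticalAlternation l ∧ Even l.length ∧
    ((IncOnRes l 0 ∧ IncOnRes l 1) ∨ (DecOnRes l 0 ∧ DecOnRes l 1))

/-- A vertical wedge alternation: a vertical alternation of even length for which one of
the odd-position and even-position subsequences is increasing and the other decreasing. -/
def IsVertWedge (l : List ℕ) : Prop :=
  VerticalAlternation l ∧ Even l.length ∧
    ((IncOnRes l 0 ∧ DecOnRes l 1) ∨ (DecOnRes l 0 ∧ IncOnRes l 1))

/-- The vertical parallel alternation `σ_m`, with `σ_m(2i−1) = m+1−i` and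
`σ_m(2i) = 2m+1−i` (1-indexed). -/
def sigmaAlt (m : ℕ) : List ℕ :=
  (List.range (2 * m)).map (fun j => if j % 2 = 0 then m - j / 2 else 2 * m - j / 2)

/-- The vertical wedge alternation `τ_m`, with `τ_m(2i−1) = m+i` and
`τ_m(2i) = m+1−i` (1-indexed). -/
def tauAlt (m : ℕ) : List ℕ :=
  (List.range (2 * m)).map (fun j => if j % 2 = 0 then m + j / 2 + 1 else m - j / 2)

/-- Standardization: replace each entry of `l` by its rank among the entries of `l`. -/
def stList (l : List ℕ) : List ℕ :=
  l.map (fun x => (l.filter (fun y => y ≤ x)).length)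


/-!
A permutation avoids both `213` and `231` exactly when each of its entries is a right-to-left
minimum or maximum (smaller, resp. larger, than all later entries), and this property passes to
patterns. `τ_m^r = 1, 2m, 2, 2m-1, …` has it, with minima at the odd positions and maxima at the
even ones, so every `τ_m^r` lies in `Av(B)` unless some member of `B` avoids `213` and `231`.
Conversely, such a member of length `n` is contained in `τ_m^r` for all `m ≥ n`: the relative
order of two entries is determined by their positions and by the kind of the earlier one, so the
`i`-th entry can be sent to position `2i - 1` or `2i` according to its kind.
-/

def IsRightToLeftMin (l : List ℕ) (i : Fin l.length) : Prop :=
  ∀ j, i < j → l.get i < l.get j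

def IsRightToLeftMax (l : List ℕ) (i : Fin l.length) : Prop :=
  ∀ j, i < j → l.get j < l.get i

def IsRightToLeftExtremal (l : List ℕ) : Prop :=
  ∀ i, IsRightToLeftMin l i ∨ IsRightToLeftMax l i

theorem IsPermList.nodup {l : List ℕ} (h : IsPermList l) : l.Nodup :=
  h.nodup_iff.mpr (List.nodup_range.map fun _ _ => Nat.add_right_cancel)

theorem isOccurrence_of_lt_imp {π β : List ℕ} {f : Fin β.length → Fin π.length}
    (hβ : β.Nodup) (hf : StrictMono f)
    (h : ∀ s t, β.get s < β.get t → π.get (f s) < π.get (f t)) : IsOccurrence π β f := by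
  refine ⟨hf, fun s t => ⟨fun hπ => ?_, h s t⟩⟩
  rcases lt_trichotomy (β.get s) (β.get t) with hlt | heq | hgt
  · exact hlt
  · obtain rfl := List.nodup_iff_injective_get.mp hβ heq
    exact absurd hπ (lt_irrefl _)
  · exact absurd (h t s hgt) (lt_asymm hπ)

section RightToLeftExtremal

variable {l : List ℕ}

theorem IsRightToLeftExtremal.not_between (hl : IsRightToLeftExtremal l) {i j k : Fin l.length}
    (hij : i < j) (hik : i < k) (hj : l.get j < l.get i) (hk : l.get i < l.get k) : False := by
  rcases hl i with hmin | hmax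
  · exact lt_asymm hj (hmin j hij)
  · exact lt_asymm hk (hmax k hik)

theorem IsRightToLeftExtremal.pAvoids_213 (hl : IsRightToLeftExtremal l) :
    PAvoids l [2,1,3] := by
  rintro ⟨f, hf, hiff⟩
  exact hl.not_between (hf (show (0 : Fin 3) < 1 by decide)) (hf (show (0 : Fin 3) < 2 by decide))
    ((hiff 1 0).mpr (by decide)) ((hiff 0 2).mpr (by decide))

theorem IsRightToLeftExtremal.pAvoids_231 (hl : IsRightToLeftExtremal l) :
    PAvoids l [2,3,1] := by
  rintro ⟨f, hf, hiff⟩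
  exact hl.not_between (hf (show (0 : Fin 3) < 2 by decide)) (hf (show (0 : Fin 3) < 1 by decide))
    ((hiff 2 0).mpr (by decide)) ((hiff 0 1).mpr (by decide))

theorem isRightToLeftExtremal_of_pAvoids (hnd : l.Nodup) (h₁ : PAvoids l [2,1,3])
    (h₂ : PAvoids l [2,3,1]) : IsRightToLeftExtremal l := by
  intro i
  by_contra! h
  simp only [IsRightToLeftMin, IsRightToLeftMax, not_forall, not_lt] at h
  obtain ⟨⟨j, hij, hj⟩, ⟨k, hik, hk⟩⟩ := h
  have hne : ∀ {a b : Fin l.length}, a < b → l.get a ≠ l.get b := fun hab he =>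
    hab.ne (List.nodup_iff_injective_get.mp hnd he)
  replace hj : l.get j < l.get i := hj.lt_of_ne (hne hij).symm
  replace hk : l.get i < l.get k := hk.lt_of_ne (hne hik)
  simp only [List.get_eq_getElem] at hj hk
  rcases lt_or_gt_of_ne (show j ≠ k by rintro rfl; exact lt_asymm hj hk) with hjk | hkj
  · refine h₁ ⟨![i, j, k], isOccurrence_of_lt_imp (by decide) ?_ ?_⟩
    · exact Fin.strictMono_iff_lt_succ.2 (by simp [Fin.forall_fin_two, hij, hjk])
    · intro s t; fin_cases s <;> fin_cases t <;> simp [hj, hk, hj.trans hk]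
  · refine h₂ ⟨![i, k, j], isOccurrence_of_lt_imp (by decide) ?_ ?_⟩
    · exact Fin.strictMono_iff_lt_succ.2 (by simp [Fin.forall_fin_two, hik, hkj])
    · intro s t; fin_cases s <;> fin_cases t <;> simp [hj, hk, hj.trans hk]

theorem IsRightToLeftExtremal.isOccurrence (hl : IsRightToLeftExtremal l) {π : List ℕ}
    {f : Fin l.length → Fin π.length} (hf : StrictMono f)
    (hmin : ∀ i, IsRightToLeftMin l i → IsRightToLeftMin π (f i))
    (hmax : ∀ i, ¬ IsRightToLeftMin l i → IsRightToLeftMax π (f i)) :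
    IsOccurrence π l f := by
  refine ⟨hf, fun s t => ?_⟩
  rcases lt_trichotomy s t with hst | rfl | hts
  · by_cases hs : IsRightToLeftMin l s
    · exact iff_of_true (hmin s hs _ (hf hst)) (hs t hst)
    · exact iff_of_false (hmax s hs _ (hf hst)).asymm ((hl s).resolve_left hs t hst).asymm
  · exact iff_of_false (lt_irrefl _) (lt_irrefl _)
  · by_cases ht : IsRightToLeftMin l t
    · exact iff_of_false (hmin t ht _ (hf hts)).asymm (ht s hts).asymm
    · exact iff_of_true (hmax t ht _ (hf hts)) ((hl t).resolve_left ht s hts)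

theorem IsRightToLeftExtremal.nodup (hl : IsRightToLeftExtremal l) : l.Nodup := by
  have hne : ∀ {i j : Fin l.length}, i < j → l.get i ≠ l.get j := fun hij =>
    (hl _).elim (fun hmin => (hmin _ hij).ne) (fun hmax => (hmax _ hij).ne')
  refine List.nodup_iff_injective_get.2 fun i j he => ?_
  rcases lt_trichotomy i j with hij | rfl | hji
  · exact absurd he (hne hij)
  · rfl
  · exact absurd he.symm (hne hji)

theorem PContains.isRightToLeftExtremal {π : List ℕ} (h : PContains π l)
    (hπ : IsRightToLeftExtremal π) : IsRightToLeftExtremal l := by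
  obtain ⟨f, hf, hiff⟩ := h
  intro i
  refine (hπ (f i)).imp (fun hmin j hij => ?_) (fun hmax j hij => ?_)
  · exact (hiff i j).1 (hmin _ (hf hij))
  · exact (hiff j i).1 (hmax _ (hf hij))

end RightToLeftExtremal

theorem length_reverse_tauAlt (m : ℕ) : (tauAlt m).reverse.length = 2 * m := by
  simp [tauAlt]

theorem getElem_reverse_tauAlt (m i : ℕ) (h : i < (tauAlt m).reverse.length) :
    (tauAlt m).reverse[i] = if i % 2 = 0 then i / 2 + 1 else 2 * m - i / 2 := by
  rw [length_reverse_tauAlt] at h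
  simp only [tauAlt, List.getElem_reverse, List.getElem_map, List.getElem_range,
    List.length_map, List.length_range]
  split_ifs <;> omega

theorem isRightToLeftMin_reverse_tauAlt {m : ℕ} {i : Fin (tauAlt m).reverse.length}
    (hi : i.val % 2 = 0) : IsRightToLeftMin (tauAlt m).reverse i := by
  intro j hij
  have := j.isLt
  rw [Fin.lt_def] at hij
  simp only [List.get_eq_getElem, getElem_reverse_tauAlt, length_reverse_tauAlt] at this ⊢
  split_ifs <;> omega

theorem isRightToLeftMax_reverse_tauAlt {m : ℕ} {i : Fin (tauAlt m).reverse.length}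
    (hi : i.val % 2 = 1) : IsRightToLeftMax (tauAlt m).reverse i := by
  intro j hij
  have := j.isLt
  rw [Fin.lt_def] at hij
  simp only [List.get_eq_getElem, getElem_reverse_tauAlt, length_reverse_tauAlt] at this ⊢
  split_ifs <;> omega

theorem isRightToLeftExtremal_reverse_tauAlt (m : ℕ) :
    IsRightToLeftExtremal (tauAlt m).reverse := fun i =>
  (Nat.mod_two_eq_zero_or_one i).imp isRightToLeftMin_reverse_tauAlt
    isRightToLeftMax_reverse_tauAlt

theorem isPermList_reverse_tauAlt (m : ℕ) : IsPermList (tauAlt m).reverse := by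
  have hsub : (tauAlt m).reverse ⊆ (List.range (2 * m)).map (· + 1) := by
    intro x hx
    obtain ⟨i, hi, rfl⟩ := List.getElem_of_mem hx
    have := hi.trans_eq (length_reverse_tauAlt m)
    simp only [getElem_reverse_tauAlt, List.mem_map, List.mem_range]
    split_ifs
    · exact ⟨i / 2, by omega, rfl⟩
    · exact ⟨2 * m - i / 2 - 1, by omega, by omega⟩
  unfold IsPermList
  rw [length_reverse_tauAlt]
  exact (List.subperm_of_subset (isRightToLeftExtremal_reverse_tauAlt m).nodup hsub)
    |>.perm_of_length_le (by simp [tauAlt])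

theorem IsRightToLeftExtremal.pContains_reverse_tauAlt {β : List ℕ}
    (hβ : IsRightToLeftExtremal β) {m : ℕ} (hm : β.length ≤ m) :
    PContains (tauAlt m).reverse β := by
  classical
  let f : Fin β.length → Fin (tauAlt m).reverse.length := fun i =>
    ⟨if IsRightToLeftMin β i then 2 * i else 2 * i + 1, by
      rw [length_reverse_tauAlt]; split_ifs <;> omega⟩
  refine ⟨f, hβ.isOccurrence (fun s t hst => ?_) (fun i hi => ?_) (fun i hi => ?_)⟩
  · simp only [f, Fin.lt_def] at hst ⊢
    split_ifs <;> omega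
  · exact isRightToLeftMin_reverse_tauAlt (by simp [f, hi])
  · exact isRightToLeftMax_reverse_tauAlt (by simp [f, hi])

theorem stmt6_general (B : Set (List ℕ)) (hB : ∀ β ∈ B, IsPermList β) :
    {π | (∃ m : ℕ, 1 ≤ m ∧ π = (tauAlt m).reverse) ∧ π ∈ Av B}.Finite ↔
      ∃ β ∈ B, PAvoids β [2,1,3] ∧ PAvoids β [2,3,1] := by
  constructor
  · intro hfin
    by_contra! hB'
    have hmem (m : ℕ) : (tauAlt (m + 1)).reverse ∈
        {π | (∃ m : ℕ, 1 ≤ m ∧ π = (tauAlt m).reverse) ∧ π ∈ Av B} := by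
      refine ⟨⟨m + 1, by omega, rfl⟩, isPermList_reverse_tauAlt _, fun β hβ hcont => ?_⟩
      have hβext := hcont.isRightToLeftExtremal (isRightToLeftExtremal_reverse_tauAlt _)
      exact hB' β hβ hβext.pAvoids_213 hβext.pAvoids_231
    refine Set.infinite_of_injective_forall_mem (fun a b hab => ?_) hmem hfin
    simpa [tauAlt] using congrArg List.length hab
  · rintro ⟨β, hβB, h₁, h₂⟩
    refine ((Set.finite_Iio β.length).image fun m => (tauAlt m).reverse).subset ?_
    rintro π ⟨⟨m, -, rfl⟩, -, hav⟩
    refine ⟨m, Set.mem_Iio.2 (not_le.1 fun hm => hav β hβB ?_), rfl⟩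
    have hβ := isRightToLeftExtremal_of_pAvoids (hB β hβB).nodup h₁ h₂
    exact hβ.pContains_reverse_tauAlt hm

/-- `Av(B)` contains only finitely many of the reversed vertical wedge
alternations `τ_m^r` iff `B` contains a permutation avoiding `213` and `231`. -/
theorem stmt6 (B : Set (List ℕ)) (hBfin : B.Finite) (hB : ∀ β ∈ B, IsPermList β) :
    {π | (∃ m : ℕ, 1 ≤ m ∧ π = (tauAlt m).reverse) ∧ π ∈ Av B}.Finite ↔
      ∃ β ∈ B, PAvoids β [2,1,3] ∧ PAvoids β [2,3,1] :=
  stmt6_general B hB
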